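/- arXiv:2510.09289 — 6 statements merged into one kernel-verified Lean document; each statement's English description precedes it below -/
import Mathlib

section
/- There exist bounded operators R and S on a Hilbert space with C(R,S)^2(I) = 0 but C(S,R)^2(I) ≠ 0; concretely, take 3×3 operator matrices S = [[0,A,B],[0,0,0],[0,0,0]] and R = [[0,0,C],[0,0,D],[0,0,0]] for suitable bounded operators A, B, C, D with AD ≠ 0. -/
open Filter Metric Polynomial

noncomputable section

variable {X : Type*} [NormedAddCommGroup X] [NormedSpace ℂ X]

/-- The commutator map `C(R,S)(A) = RA - AS`. -/
def commMap (R S : X →L[ℂ] X) : (X →L[ℂ] X) → (X →L[ℂ] X) := fun A => R ∘L A - A ∘L S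

/-- Bishop's property (β) at a point `l0`. -/
def BishopBetaAt (T : X →L[ℂ] X) (l0 : ℂ) : Prop :=
  ∃ v > (0 : ℝ), ∀ U : Set ℂ, IsOpen U → U ⊆ ball l0 v →
    ∀ f : ℕ → ℂ → X, (∀ n, AnalyticOnNhd ℂ (f n) U) →
      (∀ K ⊆ U, IsCompact K →
        TendstoUniformlyOn (fun n z => T (f n z) - z • f n z) 0 atTop K) →
      ∀ K ⊆ U, IsCompact K → TendstoUniformlyOn (fun n z => f n z) 0 atTop K

theorem stmt1 {H : Type*} [NormedAddCommGroup H] [InnerProductSpace ℂ H] [CompleteSpace H]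
    (A B C D : H →L[ℂ] H) (hAD : A ∘L D ≠ 0) :
    ∃ S R : (H × H × H) →L[ℂ] (H × H × H),
      S = ((A.comp ((ContinuousLinearMap.fst ℂ H H).comp (ContinuousLinearMap.snd ℂ H (H × H))) +
            B.comp ((ContinuousLinearMap.snd ℂ H H).comp (ContinuousLinearMap.snd ℂ H (H × H)))).prod
            ((0 : (H × H × H) →L[ℂ] H).prod 0)) ∧
      R = ((C.comp ((ContinuousLinearMap.snd ℂ H H).comp (ContinuousLinearMap.snd ℂ H (H × H)))).prod
            (((D.comp ((ContinuousLinearMap.snd ℂ H H).comp (ContinuousLinearMap.snd ℂ H (H × H))))).prod 0)) ∧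
      (commMap R S)^[2] 1 = 0 ∧ (commMap S R)^[2] 1 ≠ 0 := by
  refine ⟨_, _, rfl, rfl, ?_, ?_⟩
  · ext x <;> simp [commMap, Function.iterate_succ, ContinuousLinearMap.prod_apply]
  · intro h
    obtain ⟨z, hz⟩ : ∃ z, (A ∘L D) z ≠ 0 := by
      by_contra hc; push_neg at hc; exact hAD (ContinuousLinearMap.ext fun z => hc z)
    have := congrFun (congrArg (fun (T : (H × H × H) →L[ℂ] (H × H × H)) => fun p => T p) h) (0, 0, z)
    simp [commMap, Function.iterate_succ, ContinuousLinearMap.prod_apply, Prod.ext_iff] at this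
    apply hz
    have h2 : (2:ℂ) • (A (D z)) = 0 := by
      simpa [two_smul] using congrArg Neg.neg this
    simpa using smul_eq_zero.mp h2
end
end

section
/- If R has Bishop's property (β) at λ₀ and S ∈ Helton_k(R) (i.e. C(R,S)^k(I) = 0 for some k ≥ 1), then S has Bishop's property (β) at λ₀. -/
open Filter Metric Polynomial

noncomputable section

variable {X : Type*} [NormedAddCommGroup X] [NormedSpace ℂ X]

/-!
Write `A z = R - z` and `B z = S - z`. Since `C(A z, B z) = C(R, S)`, expanding
`C(A z, B z)^k(I) = 0` gives `A z ^ k = Q z * B z` with `Q` continuous in `z`. Hence if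
`B z f_n(z) → 0` locally uniformly, so does `A z ^ k f_n(z)`, and property (β) of `R`, applied
to the analytic functions `A z ^ j f_n(z)`, lowers the exponent `j` one step at a time down to `0`.
-/

section Cofactor

variable {B : Type*} [Ring B]

def commCofactor (x y : B) : ℕ → B
  | 0 => 0
  | k + 1 => x * commCofactor x y k - commCofactor x y k * y - x ^ k

theorem iterate_commutator_one (x y : B) (k : ℕ) :
    (fun A => x * A - A * y)^[k] 1 = x ^ k + commCofactor x y k * y := by
  induction k with
  | zero => simp [commCofactor]
  | succ k ih =>
    rw [Function.iterate_succ_apply', ih, commCofactor, pow_succ']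
    noncomm_ring

theorem Continuous.commCofactor [TopologicalSpace B] [IsTopologicalRing B] {α : Type*}
    [TopologicalSpace α] {x y : α → B} (hx : Continuous x) (hy : Continuous y) (k : ℕ) :
    Continuous fun a => commCofactor (x a) (y a) k := by
  induction k with
  | zero => exact continuous_const
  | succ k ih => simp only [_root_.commCofactor]; fun_prop

end Cofactor

theorem AnalyticAt.clm_apply {𝕜 E F G : Type*} [NontriviallyNormedField 𝕜]
    [NormedAddCommGroup E] [NormedSpace 𝕜 E] [NormedAddCommGroup F] [NormedSpace 𝕜 F]
    [NormedAddCommGroup G] [NormedSpace 𝕜 G] {c : E → F →L[𝕜] G} {u : E → F} {x : E}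
    (hc : AnalyticAt 𝕜 c x) (hu : AnalyticAt 𝕜 u x) :
    AnalyticAt 𝕜 (fun y => c y (u y)) x :=
  (ContinuousLinearMap.analyticAt_bilinear (.id 𝕜 (F →L[𝕜] G)) (c x, u x)).comp₂ hc hu

theorem TendstoUniformlyOn.clm_apply_of_norm_le {ι α 𝕜 E F : Type*} [NontriviallyNormedField 𝕜]
    [SeminormedAddCommGroup E] [NormedSpace 𝕜 E] [SeminormedAddCommGroup F] [NormedSpace 𝕜 F]
    {T : α → E →L[𝕜] F} {K : Set α} {C : ℝ} (hT : ∀ z ∈ K, ‖T z‖ ≤ C)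
    {g : ι → α → E} {l : Filter ι} (hg : TendstoUniformlyOn g 0 l K) :
    TendstoUniformlyOn (fun n z => T z (g n z)) 0 l K := by
  rw [Metric.tendstoUniformlyOn_iff] at hg ⊢
  intro ε hε
  have hC : 0 < max C 1 := lt_max_of_lt_right one_pos
  filter_upwards [hg (ε / max C 1) (div_pos hε hC)] with n hn z hz
  specialize hn z hz
  simp only [Pi.zero_apply, dist_zero_left] at hn ⊢
  calc ‖T z (g n z)‖ ≤ ‖T z‖ * ‖g n z‖ := (T z).le_opNorm _
    _ ≤ max C 1 * ‖g n z‖ := by gcongr; exact (hT z hz).trans (le_max_left _ _)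
    _ < max C 1 * (ε / max C 1) := by gcongr
    _ = ε := mul_div_cancel₀ _ hC.ne'

theorem commMap_sub_smul_one (R S : X →L[ℂ] X) (z : ℂ) :
    commMap (R - z • 1) (S - z • 1) = commMap R S := by
  funext A
  simp only [commMap, ContinuousLinearMap.sub_comp, ContinuousLinearMap.comp_sub,
    ContinuousLinearMap.smul_comp, ContinuousLinearMap.comp_smul]
  ext; simp

theorem commMap_eq_mul (R S : X →L[ℂ] X) : commMap R S = fun A => R * A - A * S := rfl

theorem sub_smul_one_pow_eq_mul {R S : X →L[ℂ] X} {k : ℕ} (h : (commMap R S)^[k] 1 = 0) (z : ℂ) :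
    (R - z • 1) ^ k = -commCofactor (R - z • 1) (S - z • 1) k * (S - z • 1) := by
  rw [← commMap_sub_smul_one R S z, commMap_eq_mul, iterate_commutator_one] at h
  rw [neg_mul, eq_neg_iff_add_eq_zero, h]

theorem sub_smul_one_pow_succ_apply (T : X →L[ℂ] X) (z : ℂ) (j : ℕ) (w : X) :
    ((T - z • 1) ^ (j + 1)) w = T (((T - z • 1) ^ j) w) - z • ((T - z • 1) ^ j) w := by
  simp [pow_succ']

theorem stmt3_general (R S : X →L[ℂ] X) (l0 : ℂ) (k : ℕ)
    (hHelton : (commMap R S)^[k] 1 = 0) (hR : BishopBetaAt R l0) :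
    BishopBetaAt S l0 := by
  obtain ⟨v, hv, hβ⟩ := hR
  refine ⟨v, hv, fun U hU hUv f hf hSf => ?_⟩
  let P (j : ℕ) : Prop := ∀ K ⊆ U, IsCompact K →
    TendstoUniformlyOn (fun n z => ((R - z • 1) ^ j) (f n z)) 0 atTop K
  have descent (j : ℕ) (hj : P (j + 1)) : P j :=
    hβ U hU hUv _ (fun n z hz => AnalyticAt.clm_apply (by fun_prop) (hf n z hz))
      fun K hKU hK => by simpa only [sub_smul_one_pow_succ_apply] using hj K hKU hK
  have top : P k := fun K hKU hK => by
    obtain ⟨C, hC⟩ := hK.exists_bound_of_continuousOn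
      ((Continuous.commCofactor (x := fun z : ℂ => R - z • 1) (y := fun z : ℂ => S - z • 1)
        (by fun_prop) (by fun_prop) k).neg.continuousOn)
    simpa [sub_smul_one_pow_eq_mul hHelton] using (hSf K hKU hK).clm_apply_of_norm_le hC
  have bottom (j : ℕ) : P j → P 0 := by
    induction j with
    | zero => exact id
    | succ j ih => exact ih ∘ descent j
  exact fun K hKU hK => by simpa using bottom k top K hKU hK

theorem stmt3 [CompleteSpace X] (R S : X →L[ℂ] X) (l0 : ℂ) (k : ℕ) (hk : 1 ≤ k)
    (hHelton : (commMap R S)^[k] 1 = 0) (hR : BishopBetaAt R l0) :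
    BishopBetaAt S l0 :=
  stmt3_general R S l0 k hHelton hR
end
end

section
/- If S, T ∈ B(X) are nilpotent equivalent (there exists k with C(S,T)^k(I) = C(T,S)^k(I) = 0), then T has Bishop's property (β) at λ₀ if and only if S has Bishop's property (β) at λ₀. -/
/-!
Expanding `R ^ k = ((L_R - R_S) + R_S) ^ k 1` with the commuting operators `L_R - R_S = C(R,S)` and
`R_S` (left and right multiplication) gives `R ^ k = ∑ (k choose j) C(R,S)^j(I) S^(k-j)`. Since
`C(T - z, S - z) = C(T, S)`, the hypothesis `C(T,S)^k(I) = 0` kills the top term and factors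
`(T - z)^k = Q(z) (S - z)` with `Q` polynomial in `z`, so `‖(T - z)^k x‖ ≤ C_K ‖(S - z) x‖` on every
compact `K`. Hence `(S - z) f_n → 0` forces `(T - z)^k f_n → 0`, and `k` applications of property (β)
for `T` give `f_n → 0`.
-/

open Filter Metric Polynomial

noncomputable section

variable {X : Type*} [NormedAddCommGroup X] [NormedSpace ℂ X]

theorem pow_eq_sum_choose_smul_commMap_iterate_mul_pow (R S : X →L[ℂ] X) (k : ℕ) :
    R ^ k = ∑ j ∈ Finset.range (k + 1),
      k.choose j • ((commMap R S)^[j] 1 * S ^ (k - j)) := by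
  set L := LinearMap.mulLeft ℂ R
  set M := LinearMap.mulRight ℂ S
  have hD : ⇑(L - M) = commMap R S := rfl
  have hcomm : Commute (L - M) M := (LinearMap.commute_mulLeft_right R S).sub_left rfl
  calc R ^ k = ((L - M + M) ^ k) 1 := by
        rw [sub_add_cancel, LinearMap.pow_mulLeft, LinearMap.mulLeft_apply, mul_one]
    _ = _ := by
        simp only [hcomm.add_pow, LinearMap.sum_apply]
        refine Finset.sum_congr rfl fun j _ => ?_
        rw [(hcomm.pow_pow j (k - j)).eq, mul_assoc, Module.End.mul_apply, Module.End.mul_apply,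
          Module.End.natCast_apply, map_nsmul, map_nsmul, LinearMap.pow_mulRight,
          LinearMap.mulRight_apply, Module.End.pow_apply, hD]

theorem pow_eq_sum_mul_of_commMap_iterate_eq_zero {R S : X →L[ℂ] X} {k : ℕ}
    (hk : (commMap R S)^[k] 1 = 0) :
    R ^ k = (∑ j ∈ Finset.range k,
      k.choose j • ((commMap R S)^[j] 1 * S ^ (k - 1 - j))) * S := by
  rw [pow_eq_sum_choose_smul_commMap_iterate_mul_pow R S k, Finset.sum_range_succ, hk, zero_mul,
    smul_zero, add_zero, Finset.sum_mul]
  refine Finset.sum_congr rfl fun j hj => ?_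
  rw [smul_mul_assoc, mul_assoc, ← pow_succ, Nat.sub_right_comm,
    Nat.sub_add_cancel (Nat.sub_pos_of_lt (Finset.mem_range.mp hj))]

theorem exists_norm_pow_sub_smul_one_apply_le {S T : X →L[ℂ] X} {k : ℕ}
    (hk : (commMap T S)^[k] 1 = 0) {K : Set ℂ} (hK : IsCompact K) :
    ∃ C, ∀ z ∈ K, ∀ x, ‖((T - z • 1) ^ k) x‖ ≤ C * ‖S x - z • x‖ := by
  set Q : ℂ → X →L[ℂ] X := fun z => ∑ j ∈ Finset.range k,
    k.choose j • ((commMap T S)^[j] 1 * (S - z • 1) ^ (k - 1 - j))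
  have hQ : ∀ z, (T - z • 1) ^ k = Q z * (S - z • 1) := fun z => by
    rw [pow_eq_sum_mul_of_commMap_iterate_eq_zero (R := T - z • 1) (S := S - z • 1)
      (by rwa [commMap_sub_smul_one]), commMap_sub_smul_one]
  obtain ⟨C, hC⟩ := hK.exists_bound_of_continuousOn (f := Q) (by fun_prop)
  refine ⟨C, fun z hz x => ?_⟩
  calc ‖((T - z • 1) ^ k) x‖ ≤ ‖Q z‖ * ‖(S - z • 1) x‖ := by
        rw [hQ]; exact (Q z).le_opNorm _
    _ = ‖Q z‖ * ‖S x - z • x‖ := rfl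
    _ ≤ C * ‖S x - z • x‖ := by gcongr; exact hC z hz

theorem TendstoUniformlyOn.zero_of_norm_le {ι α E F : Type*} [SeminormedAddCommGroup E]
    [SeminormedAddCommGroup F] {l : Filter ι} {K : Set α} {g : ι → α → E} {h : ι → α → F}
    {C : ℝ} (hg : TendstoUniformlyOn g 0 l K) (hb : ∀ i, ∀ x ∈ K, ‖h i x‖ ≤ C * ‖g i x‖) :
    TendstoUniformlyOn h 0 l K := by
  rw [SeminormedAddGroup.tendstoUniformlyOn_zero] at hg ⊢
  intro ε hε
  filter_upwards [hg (ε / (|C| + 1)) (by positivity)] with i hi x hx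
  calc ‖h i x‖ ≤ (|C| + 1) * ‖g i x‖ :=
        (hb i x hx).trans (by gcongr; linarith [le_abs_self C])
    _ < (|C| + 1) * (ε / (|C| + 1)) := by gcongr; exact hi x hx
    _ = ε := by field_simp

theorem BishopBetaAt.pow {T : X →L[ℂ] X} {l0 : ℂ} (hT : BishopBetaAt T l0) :
    ∃ v > (0 : ℝ), ∀ m : ℕ, ∀ U : Set ℂ, IsOpen U → U ⊆ ball l0 v →
      ∀ f : ℕ → ℂ → X, (∀ n, AnalyticOnNhd ℂ (f n) U) →
        TendstoLocallyUniformlyOn (fun n z => ((T - z • 1) ^ m) (f n z)) 0 atTop U →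
        TendstoLocallyUniformlyOn f 0 atTop U := by
  obtain ⟨v, hv, hβ⟩ := hT
  refine ⟨v, hv, fun m => ?_⟩
  induction m with
  | zero => exact fun _ _ _ _ _ h => h
  | succ m ih =>
    intro U hU hUv f hf hTf
    have hg : TendstoLocallyUniformlyOn (fun n z => T (f n z) - z • f n z) 0 atTop U := by
      refine ih U hU hUv _ (fun n => (T.comp_analyticOnNhd (hf n)).sub
        (analyticOnNhd_id.smul (hf n))) ?_
      convert hTf using 3 with n z
      rw [pow_succ]
      rfl
    rw [tendstoLocallyUniformlyOn_iff_forall_isCompact hU] at hg ⊢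
    exact hβ U hU hUv f hf hg

theorem BishopBetaAt.of_commMap_iterate_eq_zero {S T : X →L[ℂ] X} {l0 : ℂ} {k : ℕ}
    (hk : (commMap T S)^[k] 1 = 0) (hT : BishopBetaAt T l0) : BishopBetaAt S l0 := by
  obtain ⟨v, hv, hβ⟩ := hT.pow
  refine ⟨v, hv, fun U hU hUv f hf hSf => ?_⟩
  have hTf : TendstoLocallyUniformlyOn (fun n z => ((T - z • 1) ^ k) (f n z)) 0 atTop U := by
    refine (tendstoLocallyUniformlyOn_iff_forall_isCompact hU).2 fun K hKU hK => ?_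
    obtain ⟨C, hC⟩ := exists_norm_pow_sub_smul_one_apply_le hk hK
    exact (hSf K hKU hK).zero_of_norm_le fun n z hz => hC z hz (f n z)
  exact (tendstoLocallyUniformlyOn_iff_forall_isCompact hU).1 (hβ k U hU hUv f hf hTf)

theorem stmt6_general (S T : X →L[ℂ] X) (l0 : ℂ)
    (hnil : ∃ k : ℕ, (commMap S T)^[k] 1 = 0 ∧ (commMap T S)^[k] 1 = 0) :
    BishopBetaAt T l0 ↔ BishopBetaAt S l0 := by
  obtain ⟨k, hST, hTS⟩ := hnil
  exact ⟨.of_commMap_iterate_eq_zero hTS, .of_commMap_iterate_eq_zero hST⟩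

theorem stmt6 [CompleteSpace X] (S T : X →L[ℂ] X) (l0 : ℂ)
    (hnil : ∃ k : ℕ, (commMap S T)^[k] 1 = 0 ∧ (commMap T S)^[k] 1 = 0) :
    BishopBetaAt T l0 ↔ BishopBetaAt S l0 :=
  stmt6_general S T l0 hnil
end
end

section
/- If T ∈ B(X) has Bishop's property (β) at λ₀ and N ∈ B(X) is nilpotent with TN = NT, then T + N has Bishop's property (β) at λ₀. -/
open Filter Metric Polynomial

noncomputable section

variable {X : Type*} [NormedAddCommGroup X] [NormedSpace ℂ X]

/- Since `T` and `N^k` commute, `(T - z) N^k f_n = N^k ((T + N - z) f_n) - N^(k+1) f_n`; property (β)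
of `T` therefore lets `N^(k+1) f_n → 0` descend to `N^k f_n → 0`, and `N^m = 0` starts the descent. -/

def BishopBetaOn (T : X →L[ℂ] X) (V : Set ℂ) : Prop :=
  ∀ U : Set ℂ, IsOpen U → U ⊆ V →
    ∀ f : ℕ → ℂ → X, (∀ n, AnalyticOnNhd ℂ (f n) U) →
      (∀ K ⊆ U, IsCompact K →
        TendstoUniformlyOn (fun n z => T (f n z) - z • f n z) 0 atTop K) →
      ∀ K ⊆ U, IsCompact K → TendstoUniformlyOn (fun n z => f n z) 0 atTop K

theorem bishopBetaAt_iff (T : X →L[ℂ] X) (l0 : ℂ) :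
    BishopBetaAt T l0 ↔ ∃ v > (0 : ℝ), BishopBetaOn T (ball l0 v) :=
  Iff.rfl

theorem TendstoUniformlyOn.clm_apply_zero {ι α 𝕜 E F : Type*} [NontriviallyNormedField 𝕜]
    [SeminormedAddCommGroup E] [SeminormedAddCommGroup F] [NormedSpace 𝕜 E] [NormedSpace 𝕜 F]
    {l : Filter ι} {s : Set α} (A : E →L[𝕜] F) {G : ι → α → E} (hG : TendstoUniformlyOn G 0 l s) :
    TendstoUniformlyOn (fun n z => A (G n z)) 0 l s := by
  have hAG := A.uniformContinuous.comp_tendstoUniformlyOn hG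
  simp only [Function.comp_def, Pi.zero_apply, map_zero] at hAG
  exact hAG

theorem BishopBetaOn.tendstoUniformlyOn_apply_of_commute {T N A : X →L[ℂ] X} {V U : Set ℂ}
    (hT : BishopBetaOn T V) (hTA : Commute T A) (hU : IsOpen U) (hUV : U ⊆ V)
    {f : ℕ → ℂ → X} (hf : ∀ n, AnalyticOnNhd ℂ (f n) U)
    (hconv : ∀ K ⊆ U, IsCompact K →
      TendstoUniformlyOn (fun n z => (T + N) (f n z) - z • f n z) 0 atTop K)
    (hAN : ∀ K ⊆ U, IsCompact K →
      TendstoUniformlyOn (fun n z => A (N (f n z))) 0 atTop K) :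
    ∀ K ⊆ U, IsCompact K → TendstoUniformlyOn (fun n z => A (f n z)) 0 atTop K := by
  refine hT U hU hUV (fun n z => A (f n z))
    (fun n => (A.analyticOnNhd _).comp (hf n) (Set.mapsTo_univ _ _)) fun K hKU hK => ?_
  have hcomm (x : X) : T (A x) = A (T x) := congrArg (· x) hTA
  have hsub := ((hconv K hKU hK).clm_apply_zero A).sub (hAN K hKU hK)
  rw [sub_zero] at hsub
  refine hsub.congr (Eventually.of_forall fun n z _ => ?_)
  simp only [Pi.sub_apply, add_apply, map_sub, map_add, map_smul, hcomm]
  abel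

theorem BishopBetaOn.add_of_commute_of_isNilpotent {T N : X →L[ℂ] X} {V : Set ℂ}
    (hT : BishopBetaOn T V) (hTN : Commute T N) (hN : IsNilpotent N) :
    BishopBetaOn (T + N) V := by
  intro U hU hUV f hf hconv
  obtain ⟨m, hm⟩ := hN
  have hpow : ∀ k ≤ m, ∀ K ⊆ U, IsCompact K →
      TendstoUniformlyOn (fun n z => (N ^ k) (f n z)) 0 atTop K := by
    intro k hk
    induction hk using Nat.decreasingInduction with
    | self =>
      intro K _ _
      simp only [hm, zero_apply]
      exact tendsto_const_nhds.tendstoUniformlyOn_const K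
    | of_succ k _ ih =>
      refine hT.tendstoUniformlyOn_apply_of_commute (hTN.pow_right k) hU hUV hf hconv ?_
      simpa [pow_succ] using ih
  simpa using hpow 0 m.zero_le

theorem stmt7_general (T N : X →L[ℂ] X) (l0 : ℂ)
    (hN : ∃ m : ℕ, 1 ≤ m ∧ N ^ m = 0) (hcomm : T * N = N * T)
    (hT : BishopBetaAt T l0) :
    BishopBetaAt (T + N) l0 := by
  obtain ⟨m, -, hNm⟩ := hN
  obtain ⟨v, hv, hβ⟩ := (bishopBetaAt_iff T l0).1 hT
  exact (bishopBetaAt_iff (T + N) l0).2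
    ⟨v, hv, hβ.add_of_commute_of_isNilpotent hcomm ⟨m, hNm⟩⟩

theorem stmt7 [CompleteSpace X] (T N : X →L[ℂ] X) (l0 : ℂ)
    (hN : ∃ m : ℕ, 1 ≤ m ∧ N ^ m = 0) (hcomm : T * N = N * T)
    (hT : BishopBetaAt T l0) :
    BishopBetaAt (T + N) l0 :=
  stmt7_general T N l0 hN hcomm hT
end
end

section
/- If T ∈ B(X) has decomposition property (δ) (i.e. the adjoint T* has Bishop's property (β)) and K ∈ B(X) is algebraic with TK = KT, then T + K has decomposition property (δ). -/
open Filter Metric Polynomial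

noncomputable section

variable {X : Type*} [NormedAddCommGroup X] [NormedSpace ℂ X]

/-- The Banach-space dual (adjoint) operator `T*` acting on the dual space. -/
def dualOp (T : X →L[ℂ] X) : StrongDual ℂ X →L[ℂ] StrongDual ℂ X :=
  (ContinuousLinearMap.compL ℂ X X ℂ).flip T

/-- Decomposition property (δ): the dual operator has Bishop's property (β) everywhere. -/
def DeltaProp (T : X →L[ℂ] X) : Prop := ∀ l : ℂ, BishopBetaAt (dualOp T) l

/-!
Write `S = T*` and `M = K*`: they commute and `p(M) = 0`. Near `λ₀`, let `f_n` be analytic with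
`(S + M - z) f_n → 0` and `q(M) f_n → 0` locally uniformly. If `q = (X - c) r`, then
`g_n = r(M) f_n` satisfies `(S + c - z) g_n = r(M) (S + M - z) f_n - q(M) f_n → 0`, so property (β)
of `S` at `λ₀ - c` gives `r(M) f_n = g_n → 0`. Removing the roots of `p` one at a time leaves a
nonzero constant, and then `f_n → 0`.
-/

theorem Commute.aeval_right {R A : Type*} [CommSemiring R] [Semiring A] [Algebra R A] {a m : A}
    (h : Commute a m) (q : Polynomial R) : Commute a (aeval m q) := by
  induction q using Polynomial.induction_on' with
  | add p q hp hq => simpa only [map_add] using hp.add_right hq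
  | monomial n r =>
    rw [aeval_monomial]
    exact (Algebra.commute_algebraMap_right r a).mul_right (h.pow_right n)

theorem TendstoLocallyUniformlyOn.clm_apply_zero {f : ℕ → ℂ → X} {U : Set ℂ}
    (A : X →L[ℂ] X) (h : TendstoLocallyUniformlyOn f 0 atTop U) :
    TendstoLocallyUniformlyOn (fun n z => A (f n z)) 0 atTop U := by
  have h' := A.uniformContinuous.comp_tendstoLocallyUniformlyOn h
  rwa [show ⇑A ∘ (0 : ℂ → X) = 0 from funext fun _ => map_zero A] at h'

theorem tendstoLocallyUniformlyOn_zero {α β ι : Type*} [TopologicalSpace α] [UniformSpace β]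
    [Zero β] (l : Filter ι) (s : Set α) :
    TendstoLocallyUniformlyOn (fun (_ : ι) (_ : α) => (0 : β)) 0 l s :=
  (tendsto_const_nhds.tendstoUniformlyOn_const s).tendstoLocallyUniformlyOn

def BishopBetaModAt (A B : X →L[ℂ] X) (l0 : ℂ) : Prop :=
  ∃ v > (0 : ℝ), ∀ U : Set ℂ, IsOpen U → U ⊆ ball l0 v →
    ∀ f : ℕ → ℂ → X, (∀ n, AnalyticOnNhd ℂ (f n) U) →
      TendstoLocallyUniformlyOn (fun n z => A (f n z) - z • f n z) 0 atTop U →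
      TendstoLocallyUniformlyOn (fun n z => B (f n z)) 0 atTop U →
      TendstoLocallyUniformlyOn f 0 atTop U

theorem bishopBetaAt_iff_bishopBetaModAt_zero {A : X →L[ℂ] X} {l0 : ℂ} :
    BishopBetaAt A l0 ↔ BishopBetaModAt A 0 l0 := by
  unfold BishopBetaAt BishopBetaModAt
  refine exists_congr fun v => and_congr_right fun _ =>
    forall₄_congr fun U hU _ f => forall_congr' fun _ => ?_
  simp only [← tendstoLocallyUniformlyOn_iff_forall_isCompact hU, zero_apply]
  exact ⟨fun h hAf _ => h hAf, fun h hAf => h hAf (tendstoLocallyUniformlyOn_zero _ _)⟩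

namespace BishopBetaModAt

variable {A B : X →L[ℂ] X} {l0 : ℂ}

theorem of_isUnit (hB : IsUnit B) : BishopBetaModAt A B l0 := by
  refine ⟨1, one_pos, fun U _ _ f _ _ hBf => ?_⟩
  refine (hBf.clm_apply_zero ↑hB.unit⁻¹).congr fun n z _ => ?_
  change (↑hB.unit⁻¹ * B) (f n z) = f n z
  rw [IsUnit.val_inv_mul, one_apply_eq_self]

theorem add_smul_one {c : ℂ} (h : BishopBetaModAt A B (l0 - c)) :
    BishopBetaModAt (A + c • (1 : X →L[ℂ] X)) B l0 := by
  obtain ⟨v, hv, h⟩ := h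
  refine ⟨v, hv, fun U hU hUv f hf hAf hBf => ?_⟩
  have hτ : Continuous (· + c) := continuous_add_const c
  have hτU : Set.MapsTo (· + c) ((· + c) ⁻¹' U) U := Set.mapsTo_preimage _ U
  have hUv' : (· + c) ⁻¹' U ⊆ ball (l0 - c) v := fun w hw => by
    rw [mem_ball, dist_eq_norm, sub_sub_eq_add_sub, ← dist_eq_norm]
    exact hUv hw
  have hf' := h _ (hU.preimage hτ) hUv' (fun n w => f n (w + c))
    (fun n w hw => (hf n _ hw).comp (g := f n) (f := (· + c)) (by fun_prop))
    ((hAf.comp _ hτU hτ.continuousOn).congr fun n w _ => ?_) (hBf.comp _ hτU hτ.continuousOn)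
  · refine (hf'.comp (· - c) (fun z hz => ?_) (continuous_sub_right c).continuousOn).congr
      fun n z _ => ?_
    · simpa using hz
    · simp
  · simp only [Function.comp_apply, add_apply, smul_apply, one_apply_eq_self, add_smul]
    abel

theorem mul {N : X →L[ℂ] X} (hN : BishopBetaModAt (A - N) 0 l0) (hB : BishopBetaModAt A B l0)
    (hAB : Commute A B) : BishopBetaModAt A (N * B) l0 := by
  obtain ⟨v₁, hv₁, hN⟩ := hN
  obtain ⟨v₂, hv₂, hB⟩ := hB
  refine ⟨min v₁ v₂, lt_min hv₁ hv₂, fun U hU hUv f hf hAf hNBf => ?_⟩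
  refine hB U hU (hUv.trans (ball_subset_ball (min_le_right _ _))) f hf hAf ?_
  have hAg : TendstoLocallyUniformlyOn (fun n z => A (B (f n z)) - z • B (f n z)) 0 atTop U :=
    (hAf.clm_apply_zero B).congr fun n z _ => by
      simp only [map_sub, map_smul, ← mul_apply_eq_comp, hAB.eq]
  have hANg := hAg.sub hNBf
  rw [sub_zero] at hANg
  refine hN U hU (hUv.trans (ball_subset_ball (min_le_left _ _))) (fun n z => B (f n z))
    (fun n => B.comp_analyticOnNhd (hf n)) (hANg.congr fun n z _ => ?_) ?_
  · simp only [Pi.sub_apply, sub_apply, mul_apply_eq_comp]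
    abel
  · exact tendstoLocallyUniformlyOn_zero atTop U

end BishopBetaModAt

section

variable {S M : X →L[ℂ] X}

theorem bishopBetaModAt_aeval_C_mul_prod (hS : ∀ l, BishopBetaAt S l) (hSM : Commute S M)
    {a : ℂ} (ha : a ≠ 0) (l0 : ℂ) (s : Multiset ℂ) :
    BishopBetaModAt (S + M) (aeval M (C a * (s.map (Polynomial.X - C ·)).prod)) l0 := by
  induction s using Multiset.induction_on with
  | empty =>
    simp only [Multiset.map_zero, Multiset.prod_zero, mul_one, aeval_C]
    exact .of_isUnit ((isUnit_iff_ne_zero.mpr ha).map _)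
  | cons c s ih =>
    have hshift : BishopBetaModAt (S + M - (M - c • 1)) 0 l0 := by
      rw [show S + M - (M - c • 1) = S + c • 1 by abel]
      exact (bishopBetaAt_iff_bishopBetaModAt_zero.mp (hS (l0 - c))).add_smul_one
    convert hshift.mul ih ((hSM.add_left (Commute.refl M)).aeval_right _) using 2
    rw [Multiset.map_cons, Multiset.prod_cons, mul_left_comm, map_mul, map_sub, aeval_X, aeval_C,
      Algebra.algebraMap_eq_smul_one]

theorem bishopBetaAt_add_of_aeval_eq_zero (hS : ∀ l, BishopBetaAt S l) (hSM : Commute S M)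
    {q : Polynomial ℂ} (hq : q ≠ 0) (hqM : aeval M q = 0) (l0 : ℂ) :
    BishopBetaAt (S + M) l0 := by
  have h := bishopBetaModAt_aeval_C_mul_prod hS hSM (leadingCoeff_ne_zero.mpr hq) l0 q.roots
  rw [C_leadingCoeff_mul_prod_multiset_X_sub_C IsAlgClosed.card_roots_eq_natDegree, hqM] at h
  exact bishopBetaAt_iff_bishopBetaModAt_zero.mpr h

end

theorem dualOp_add (T K : X →L[ℂ] X) : dualOp (T + K) = dualOp T + dualOp K :=
  map_add _ T K

theorem dualOp_mul (T K : X →L[ℂ] X) : dualOp (T * K) = dualOp K * dualOp T := by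
  ext
  rfl

set_option synthInstance.maxHeartbeats 40000 in
theorem dualOp_pow (T : X →L[ℂ] X) (n : ℕ) : dualOp (T ^ n) = dualOp T ^ n := by
  induction n with
  | zero => ext; rfl
  | succ n ih => rw [pow_succ, dualOp_mul, ih, pow_succ']

theorem Commute.dualOp {T K : X →L[ℂ] X} (h : Commute T K) : Commute (dualOp T) (dualOp K) := by
  rw [Commute, SemiconjBy, ← dualOp_mul, ← dualOp_mul, h.eq]

theorem aeval_dualOp (T : X →L[ℂ] X) (p : Polynomial ℂ) :
    aeval (dualOp T) p = dualOp (aeval T p) := by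
  simp only [aeval_eq_sum_range, ← dualOp_pow]
  unfold dualOp
  simp only [map_sum, map_smul]

theorem stmt14_general (T K : X →L[ℂ] X) (p : Polynomial ℂ)
    (hδ : DeltaProp T) (hp : p ≠ 0) (hpK : aeval K p = 0) (hcomm : T * K = K * T) :
    DeltaProp (T + K) := by
  intro l
  rw [dualOp_add]
  refine bishopBetaAt_add_of_aeval_eq_zero hδ (Commute.dualOp hcomm) hp ?_ l
  rw [aeval_dualOp, hpK, dualOp, map_zero]

theorem stmt14 [CompleteSpace X] (T K : X →L[ℂ] X) (p : Polynomial ℂ)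
    (hδ : DeltaProp T) (hp : p ≠ 0) (hpK : aeval K p = 0) (hcomm : T * K = K * T) :
    DeltaProp (T + K) :=
  stmt14_general T K p hδ hp hpK hcomm
end
end

section
/- If T ∈ B(X) has Bishop's property (β), K ∈ B(X) is algebraic with TK = KT, and f is a scalar-valued analytic function on a neighborhood of σ(T + K), then f(T + K) has Bishop's property (β). -/
/-!
Factor `p(K) = c ∏ (K - a)` over the roots `a` of `p`. If `(T + K - z) fₙ → 0` and
`(K - a) Q fₙ → 0` for an operator `Q` commuting with `T + K`, then
`(T + a - z) Q fₙ = Q (T + K - z) fₙ - (K - a) Q fₙ → 0`, and (β) for `T + a`, which is (β)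
for `T` at translated points, gives `Q fₙ → 0`. Peeling the factors off `p(K) = 0` one at a
time gives `fₙ → 0`, i.e. (β) for `T + K`, with radius the least of the finitely many radii of
`T` at the points `l - a`. The analytic functional calculus then carries (β) over to `f(T + K)`.
-/

open Filter Metric Polynomial

noncomputable section

variable {X : Type*} [NormedAddCommGroup X] [NormedSpace ℂ X]

open Topology

def BetaOn (S : X →L[ℂ] X) (U : Set ℂ) : Prop :=
  ∀ f : ℕ → ℂ → X, (∀ n, AnalyticOnNhd ℂ (f n) U) →
    TendstoLocallyUniformlyOn (fun n z => S (f n z) - z • f n z) 0 atTop U →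
    TendstoLocallyUniformlyOn f 0 atTop U

theorem betaOn_iff_forall_isCompact {S : X →L[ℂ] X} {U : Set ℂ} (hU : IsOpen U) :
    BetaOn S U ↔ ∀ f : ℕ → ℂ → X, (∀ n, AnalyticOnNhd ℂ (f n) U) →
      (∀ K ⊆ U, IsCompact K →
        TendstoUniformlyOn (fun n z => S (f n z) - z • f n z) 0 atTop K) →
      ∀ K ⊆ U, IsCompact K → TendstoUniformlyOn (fun n z => f n z) 0 atTop K := by
  simp only [BetaOn, tendstoLocallyUniformlyOn_iff_forall_isCompact hU]

theorem bishopBetaAt_iff_eventually (S : X →L[ℂ] X) (l : ℂ) :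
    BishopBetaAt S l ↔
      ∀ᶠ v in 𝓝[>] (0 : ℝ), ∀ U, IsOpen U → U ⊆ ball l v → BetaOn S U := by
  constructor
  · rintro ⟨v, hv, h⟩
    filter_upwards [Ioo_mem_nhdsGT hv] with r hr U hU hUr
    exact (betaOn_iff_forall_isCompact hU).2 (h U hU (hUr.trans (ball_subset_ball hr.2.le)))
  · intro h
    obtain ⟨v, hv, hv0⟩ := (h.and self_mem_nhdsWithin).exists
    exact ⟨v, hv0, fun U hU hUv => (betaOn_iff_forall_isCompact hU).1 (hv U hU hUv)⟩

theorem BetaOn.add_algebraMap {S : X →L[ℂ] X} {U : Set ℂ} (a : ℂ)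
    (h : BetaOn S ((· + a) ⁻¹' U)) : BetaOn (S + algebraMap ℂ _ a) U := by
  intro f hf hres
  have hg := h (fun n w => f n (w + a)) (fun n w hw => (hf n _ hw).comp_of_eq
      (analyticAt_id.add analyticAt_const) rfl) <| by
    refine (hres.comp (· + a) (fun w hw => hw) (continuous_add_const a).continuousOn).congr
      fun n w _ => ?_
    simp [Algebra.algebraMap_eq_smul_one, add_smul]
  have := hg.comp (· - a) (fun z hz => by simpa using hz) (continuous_sub_right a).continuousOn
  simp only [Function.comp_def, sub_add_cancel] at this
  exact this

theorem BishopBetaAt.add_algebraMap {S : X →L[ℂ] X} {l a : ℂ} (h : BishopBetaAt S (l - a)) :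
    BishopBetaAt (S + algebraMap ℂ _ a) l := by
  rw [bishopBetaAt_iff_eventually] at h ⊢
  filter_upwards [h] with v hv U hU hUv
  refine .add_algebraMap a (hv _ (hU.preimage (continuous_add_const a)) fun w hw => ?_)
  have := hUv hw
  rw [mem_ball, dist_eq_norm] at this ⊢
  rwa [sub_sub_eq_add_sub]

theorem BetaOn.tendstoLocallyUniformlyOn_apply_of_commute {A N Q : X →L[ℂ] X} {U : Set ℂ}
    (hA : BetaOn A U) (hQ : Commute Q (A + N)) {f : ℕ → ℂ → X}
    (hf : ∀ n, AnalyticOnNhd ℂ (f n) U)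
    (hres : TendstoLocallyUniformlyOn (fun n z => (A + N) (f n z) - z • f n z) 0 atTop U)
    (hNQ : TendstoLocallyUniformlyOn (fun n z => N (Q (f n z))) 0 atTop U) :
    TendstoLocallyUniformlyOn (fun n z => Q (f n z)) 0 atTop U := by
  refine hA _ (fun n z hz => (Q.analyticAt _).comp (hf n z hz)) ?_
  have hQres := Q.uniformContinuous.comp_tendstoLocallyUniformlyOn hres
  refine ((hQres.sub hNQ).congr fun n z _ => ?_).congr_right fun z _ => by simp
  have hcomm : Q ((A + N) (f n z)) = (A + N) (Q (f n z)) := congrArg (· (f n z)) hQ.eq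
  simp only [Pi.sub_apply, Function.comp_apply, map_sub, map_smul, hcomm]
  rw [_root_.add_apply]
  abel

theorem commute_aeval_of_commute {R A : Type*} [CommSemiring R] [Semiring A] [Algebra R A]
    {a b : A} (h : Commute a b) (q : R[X]) : Commute a (aeval b q) := by
  have hmem := Algebra.adjoin_le_centralizer_centralizer R {b}
    (aeval_mem_adjoin_singleton R b (p := q))
  rw [Subalgebra.mem_centralizer_iff] at hmem
  refine hmem a ((Subalgebra.mem_centralizer_iff R).2 fun g hg => ?_)
  rw [Set.mem_singleton_iff.1 hg]
  exact h.eq.symm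

theorem aeval_prod_roots_sub_eq_zero {k A : Type*} [Field k] [IsAlgClosed k] [Ring A]
    [Algebra k A] {p : k[X]} (hp : p ≠ 0) {a : A} (h : aeval a p = 0) :
    aeval a (p.roots.map (Polynomial.X - C ·)).prod = 0 := by
  have := congrArg (aeval a) (IsAlgClosed.splits p).eq_prod_roots
  rw [h, map_mul, aeval_C, Algebra.algebraMap_eq_smul_one, smul_mul_assoc, one_mul] at this
  exact (smul_eq_zero.mp this.symm).resolve_left (leadingCoeff_ne_zero.mpr hp)

theorem tendstoLocallyUniformlyOn_of_aeval_prod {T K : X →L[ℂ] X} {U : Set ℂ}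
    (hc : Commute T K) {f : ℕ → ℂ → X} (hf : ∀ n, AnalyticOnNhd ℂ (f n) U)
    (hres : TendstoLocallyUniformlyOn (fun n z => (T + K) (f n z) - z • f n z) 0 atTop U)
    (s : Multiset ℂ) (hs : ∀ a ∈ s, BetaOn (T + algebraMap ℂ _ a) U)
    (hprod : TendstoLocallyUniformlyOn
      (fun n z => aeval K (s.map (Polynomial.X - C ·)).prod (f n z)) 0 atTop U) :
    TendstoLocallyUniformlyOn f 0 atTop U := by
  induction s using Multiset.induction_on with
  | empty => simpa using hprod
  | cons a s ih =>
    refine ih (fun b hb => hs b (Multiset.mem_cons_of_mem hb)) ?_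
    refine (hs a (Multiset.mem_cons_self a s)).tendstoLocallyUniformlyOn_apply_of_commute
      (N := K - algebraMap ℂ _ a) ?_ hf (by rwa [add_add_sub_cancel]) ?_
    · rw [add_add_sub_cancel]
      exact (commute_aeval_of_commute (hc.add_left (Commute.refl K)) _).symm
    · simpa [Multiset.map_cons, Multiset.prod_cons] using hprod

theorem betaOn_add_of_aeval_eq_zero {T K : X →L[ℂ] X} {U : Set ℂ} (hc : Commute T K)
    (s : Multiset ℂ) (hs : ∀ a ∈ s, BetaOn (T + algebraMap ℂ _ a) U)
    (hK : aeval K (s.map (Polynomial.X - C ·)).prod = 0) : BetaOn (T + K) U := by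
  intro f hf hres
  refine tendstoLocallyUniformlyOn_of_aeval_prod hc hf hres s hs ?_
  simp only [hK, _root_.zero_apply]
  exact (tendsto_const_nhds.tendstoUniformlyOn_const U).tendstoLocallyUniformlyOn

theorem BishopBetaAt.add_of_aeval_eq_zero {T K : X →L[ℂ] X} (hT : ∀ l, BishopBetaAt T l)
    (hc : Commute T K) {p : ℂ[X]} (hp : p ≠ 0) (hpK : aeval K p = 0) (l : ℂ) :
    BishopBetaAt (T + K) l := by
  have hroots : ∀ a ∈ p.roots.toFinset, ∀ᶠ v in 𝓝[>] (0 : ℝ),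
      ∀ U, IsOpen U → U ⊆ ball l v → BetaOn (T + algebraMap ℂ _ a) U :=
    fun a _ => (bishopBetaAt_iff_eventually _ _).1 (hT (l - a)).add_algebraMap
  rw [bishopBetaAt_iff_eventually]
  filter_upwards [(eventually_all_finset _).2 hroots] with v hv U hU hUv
  exact betaOn_add_of_aeval_eq_zero hc p.roots
    (fun a ha => hv a (Multiset.mem_toFinset.2 ha) U hU hUv)
    (aeval_prod_roots_sub_eq_zero hp hpK)

theorem stmt17_general (T K : X →L[ℂ] X) (p : Polynomial ℂ) (f : ℂ → ℂ)
    (Φ : (X →L[ℂ] X) → (ℂ → ℂ) → (X →L[ℂ] X))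
    (hT : ∀ l : ℂ, BishopBetaAt T l) (hp : p ≠ 0) (hpK : aeval K p = 0)
    (hcomm : T * K = K * T)
    (hf : AnalyticOnNhd ℂ f (spectrum ℂ (T + K)))
    (hΦ : ∀ (S : X →L[ℂ] X) (g : ℂ → ℂ), AnalyticOnNhd ℂ g (spectrum ℂ S) →
      (∀ l : ℂ, BishopBetaAt S l) → ∀ l : ℂ, BishopBetaAt (Φ S g) l) :
    ∀ l : ℂ, BishopBetaAt (Φ (T + K) f) l :=
  hΦ (T + K) f hf (BishopBetaAt.add_of_aeval_eq_zero hT hcomm hp hpK)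

theorem stmt17 [CompleteSpace X] (T K : X →L[ℂ] X) (p : Polynomial ℂ) (f : ℂ → ℂ)
    (Φ : (X →L[ℂ] X) → (ℂ → ℂ) → (X →L[ℂ] X))
    (hT : ∀ l : ℂ, BishopBetaAt T l) (hp : p ≠ 0) (hpK : aeval K p = 0)
    (hcomm : T * K = K * T)
    (hf : AnalyticOnNhd ℂ f (spectrum ℂ (T + K)))
    (hΦ : ∀ (S : X →L[ℂ] X) (g : ℂ → ℂ), AnalyticOnNhd ℂ g (spectrum ℂ S) →
      (∀ l : ℂ, BishopBetaAt S l) → ∀ l : ℂ, BishopBetaAt (Φ S g) l) :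
    ∀ l : ℂ, BishopBetaAt (Φ (T + K) f) l :=
  stmt17_general T K p f Φ hT hp hpK hcomm hf hΦ
end
end
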